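/- arXiv:2309.05849 — 5 statements merged into one kernel-verified Lean document; each statement's English description precedes it below -/
import Mathlib

section
/- Let p ≥ 1, k, n ≥ 1 and m ≥ 0 be integers, and let a (p, n, k, m) periodically time-varying convolutional encoder over GF(2) be given by constituent matrices G i j ∈ Matrix (Fin k) (Fin n) (ZMod 2) for i ∈ Fin p and j ∈ {0, 1, …, m}, encoding an input sequence u : ℕ → (Fin k → ZMod 2) into the output sequence c : ℕ → (Fin n → ZMod 2) with c t = ∑_{j = 0}^{min(t, m)} (u (t − j)) ᵥ* (G (t mod p) j). Then there exist an integer M = ⌈m / p⌉ and matrices H l ∈ Matrix (Fin p × Fin k) (Fin p × Fin n) (ZMod 2) for l ∈ {0, 1, …, M} such that for every input u and every s ∈ ℕ, the blocked output C s defined by C s (a, q) = c (s·p + a) q satisfies C s = ∑_{l = 0}^{min(s, M)} (U (s − l)) ᵥ* (H l), where U s (a, r) = u (s·p + a) r. (In other words, every period-p, rate k/n, memory m periodically time-varying convolutional encoder is strictly equivalent to a rate kp/np, memory ⌈m/p⌉ time-invariant convolutional encoder.) -/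
open Matrix

/-- Extension of the constituent matrices to all natural-number delays,
zero beyond the memory `m`. -/
def Gext {p k n : ℕ} (m : ℕ) (G : Fin p → Fin (m + 1) → Matrix (Fin k) (Fin n) (ZMod 2))
    (i : Fin p) (j : ℕ) : Matrix (Fin k) (Fin n) (ZMod 2) :=
  if h : j ≤ m then G i ⟨j, Nat.lt_succ_of_le h⟩ else 0


/-- Every period-`p`, rate `k/n`, memory `m` periodically time-varying convolutional
encoder over GF(2) is strictly equivalent to a rate `kp/np`, memory `⌈m/p⌉`
time-invariant convolutional encoder. -/
theorem periodically_time_varying_equiv_time_invariant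
    (p k n m : ℕ) (hp : 1 ≤ p) (hk : 1 ≤ k) (hn : 1 ≤ n)
    (G : Fin p → Fin (m + 1) → Matrix (Fin k) (Fin n) (ZMod 2)) :
    ∃ (M : ℕ) (H : Fin (M + 1) → Matrix (Fin p × Fin k) (Fin p × Fin n) (ZMod 2)),
      M = (m + p - 1) / p ∧
      ∀ u : ℕ → Fin k → ZMod 2,
        -- output sequence of the periodically time-varying encoder:
        -- c t = ∑_{j=0}^{min(t,m)} u (t - j) ᵥ* G (t mod p) j
        let c : ℕ → Fin n → ZMod 2 := fun t =>
          ∑ j : Fin (m + 1), if (j : ℕ) ≤ t then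
            (u (t - (j : ℕ))) ᵥ* (G ⟨t % p, Nat.mod_lt t hp⟩ j) else 0
        -- blocked input and output sequences
        let U : ℕ → (Fin p × Fin k → ZMod 2) := fun s x => u (s * p + (x.1 : ℕ)) x.2
        let C : ℕ → (Fin p × Fin n → ZMod 2) := fun s x => c (s * p + (x.1 : ℕ)) x.2
        ∀ s : ℕ, C s =
          ∑ l : Fin (M + 1), if (l : ℕ) ≤ s then (U (s - (l : ℕ))) ᵥ* (H l) else 0 := by
  classical
  have hp0 : 0 < p := hp
  set M := (m + p - 1) / p with hM
  refine ⟨M, fun l x y =>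
      if (x.1 : ℕ) ≤ (l : ℕ) * p + (y.1 : ℕ)
      then Gext m G y.1 ((l : ℕ) * p + (y.1 : ℕ) - (x.1 : ℕ)) x.2 y.2 else 0, rfl, ?_⟩
  intro u c U C s
  funext x
  obtain ⟨b, q⟩ := x
  have hb : (b : ℕ) < p := b.isLt
  set t := s * p + (b : ℕ) with ht
  clear_value t
  -- the Fin index in the definition of c equals b
  have htm : (⟨t % p, Nat.mod_lt t hp⟩ : Fin p) = b := by
    apply Fin.ext
    show t % p = b
    rw [ht, Nat.mul_comm, Nat.mul_add_mod, Nat.mod_eq_of_lt hb]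
  -- key arithmetic: nonzero terms have l ≤ M
  have hleM : ∀ l : ℕ, l * p ≤ m + p - 1 → l ≤ M := fun l h =>
    (Nat.le_div_iff_mul_le hp0).mpr h
  -- term functions
  set F : ℕ → ZMod 2 := fun j => ∑ r, u (t - j) r * Gext m G b j r q with hF
  set g : ℕ → ℕ → ZMod 2 := fun l a =>
    if a ≤ l * p + (b : ℕ)
    then ∑ r, u ((s - l) * p + a) r * Gext m G b (l * p + (b : ℕ) - a) r q else 0 with hg
  have hFzero : ∀ j, m < j → F j = 0 := by
    intro j hj
    simp [hF, Gext, Nat.not_le.mpr hj]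
  have hgzero : ∀ l a, a < p → M < l → g l a = 0 := by
    intro l a ha hl
    by_cases hla : a ≤ l * p + (b : ℕ)
    · have hG : ¬ (l * p + (b : ℕ) - a ≤ m) := by
        intro hle
        exact absurd (hleM l (by omega)) (Nat.not_le.mpr hl)
      have hGz : Gext m G b (l * p + (b : ℕ) - a) = 0 := dif_neg hG
      simp only [hg]
      rw [if_pos hla, hGz]
      simp
    · simp [hg, hla]
  -- Step 1 : c t q = ∑ j in range (t+1), F j
  have step1 : c t q = ∑ j ∈ Finset.range (t + 1), F j := by
    have e1 : c t q = ∑ j ∈ Finset.range (m + 1), (if j ≤ t then F j else 0) := by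
      have hc : c t q = (∑ j : Fin (m + 1), if (j : ℕ) ≤ t then
          (u (t - (j : ℕ))) ᵥ* (G ⟨t % p, Nat.mod_lt t hp⟩ j) else 0) q := rfl
      rw [hc, Finset.sum_apply]
      rw [← Fin.sum_univ_eq_sum_range (fun j => if j ≤ t then F j else 0) (m + 1)]
      refine Finset.sum_congr rfl fun j _ => ?_
      rw [htm]
      by_cases hjt : (j : ℕ) ≤ t
      · simp only [hjt, if_true, ite_apply, Pi.zero_apply, if_pos hjt]
        simp [hF, Matrix.vecMul, dotProduct, Gext, Nat.lt_succ_iff.mp j.isLt]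
      · simp [hjt]
    rw [e1]
    have e2 : ∑ j ∈ Finset.range (m + 1), (if j ≤ t then F j else 0)
        = ∑ j ∈ Finset.range (max m t + 1), (if j ≤ t then F j else 0) := by
      apply Finset.sum_subset
      · intro j hj; simp at hj ⊢; omega
      · intro j hj1 hj2
        simp at hj1 hj2
        by_cases hjt : j ≤ t
        · simp [hjt, hFzero j (by omega)]
        · simp [hjt]
    have e3 : ∑ j ∈ Finset.range (t + 1), F j
        = ∑ j ∈ Finset.range (max m t + 1), (if j ≤ t then F j else 0) := by
      have e3a : ∑ j ∈ Finset.range (t + 1), F j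
          = ∑ j ∈ Finset.range (t + 1), (if j ≤ t then F j else 0) :=
        Finset.sum_congr rfl fun j hj =>
          (if_pos (show j ≤ t from by simp only [Finset.mem_range] at hj; omega)).symm
      rw [e3a]
      apply Finset.sum_subset
      · intro j hj; simp at hj ⊢; omega
      · intro j hj1 hj2
        simp at hj1 hj2
        rw [if_neg (by omega)]
    rw [e2, ← e3]
  -- Step 2 : RHS = double sum of g
  have step2 : (∑ l : Fin (M + 1), if (l : ℕ) ≤ s then
        (U (s - (l : ℕ))) ᵥ* (fun x y =>
          if (x.1 : ℕ) ≤ (l : ℕ) * p + (y.1 : ℕ)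
          then Gext m G y.1 ((l : ℕ) * p + (y.1 : ℕ) - (x.1 : ℕ)) x.2 y.2 else 0)
        else 0) (b, q)
      = ∑ l ∈ Finset.range (s + 1), ∑ a ∈ Finset.range p, g l a := by
    rw [Finset.sum_apply]
    have e1 : ∀ l : Fin (M + 1),
        (if (l : ℕ) ≤ s then
        (U (s - (l : ℕ))) ᵥ* (fun x y =>
          if (x.1 : ℕ) ≤ (l : ℕ) * p + (y.1 : ℕ)
          then Gext m G y.1 ((l : ℕ) * p + (y.1 : ℕ) - (x.1 : ℕ)) x.2 y.2 else 0)
        else 0) (b, q)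
        = if (l : ℕ) ≤ s then ∑ a : Fin p, g (l : ℕ) (a : ℕ) else 0 := by
      intro l
      by_cases hls : (l : ℕ) ≤ s
      · rw [if_pos hls, if_pos hls]
        simp only [Matrix.vecMul, dotProduct, Fintype.sum_prod_type]
        refine Finset.sum_congr rfl fun a _ => ?_
        simp only [hg, U, mul_ite, mul_zero]
        by_cases hla : (a : ℕ) ≤ (l : ℕ) * p + (b : ℕ)
        · simp [hla]
        · simp [hla]
      · simp [hls]
    rw [Finset.sum_congr rfl fun l _ => e1 l]
    rw [Fin.sum_univ_eq_sum_range (fun l => if l ≤ s then ∑ a : Fin p, g l (a:ℕ) else 0) (M + 1)]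
    have e2 : ∀ l : ℕ, (∑ a : Fin p, g l (a : ℕ)) = ∑ a ∈ Finset.range p, g l a :=
      fun l => Fin.sum_univ_eq_sum_range (fun a => g l a) p
    simp only [e2]
    have e3 : ∑ l ∈ Finset.range (M + 1), (if l ≤ s then ∑ a ∈ Finset.range p, g l a else 0)
        = ∑ l ∈ Finset.range (max M s + 1), (if l ≤ s then ∑ a ∈ Finset.range p, g l a else 0) := by
      apply Finset.sum_subset
      · intro l hl; simp at hl ⊢; omega
      · intro l hl1 hl2
        simp only [Finset.mem_range] at hl1 hl2
        by_cases hls : l ≤ s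
        · rw [if_pos hls]
          exact Finset.sum_eq_zero fun a ha =>
            hgzero l a (Finset.mem_range.mp ha) (by omega)
        · rw [if_neg hls]
    have e4 : ∑ l ∈ Finset.range (s + 1), ∑ a ∈ Finset.range p, g l a
        = ∑ l ∈ Finset.range (max M s + 1), (if l ≤ s then ∑ a ∈ Finset.range p, g l a else 0) := by
      have e4a : ∑ l ∈ Finset.range (s + 1), ∑ a ∈ Finset.range p, g l a
          = ∑ l ∈ Finset.range (s + 1), (if l ≤ s then ∑ a ∈ Finset.range p, g l a else 0) :=
        Finset.sum_congr rfl fun l hl =>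
          (if_pos (show l ≤ s from by simp only [Finset.mem_range] at hl; omega)).symm
      rw [e4a]
      apply Finset.sum_subset
      · intro l hl; simp at hl ⊢; omega
      · intro l hl1 hl2
        simp only [Finset.mem_range] at hl1 hl2
        rw [if_neg (by omega)]
    rw [e3, ← e4]
  -- Step 3 : the bijection
  have step3 : ∑ l ∈ Finset.range (s + 1), ∑ a ∈ Finset.range p, g l a
      = ∑ j ∈ Finset.range (t + 1), F j := by
    rw [← Finset.sum_product']
    have hgif : (∑ x ∈ Finset.range (s + 1) ×ˢ Finset.range p, g x.1 x.2)
        = ∑ x ∈ Finset.range (s + 1) ×ˢ Finset.range p,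
            (if x.2 ≤ x.1 * p + (b : ℕ) then
              (∑ r, u ((s - x.1) * p + x.2) r *
                Gext m G b (x.1 * p + (b : ℕ) - x.2) r q) else 0) :=
      Finset.sum_congr rfl fun x _ => by simp only [hg]
    rw [hgif, ← Finset.sum_filter]
    apply Finset.sum_nbij' (i := fun x : ℕ × ℕ => x.1 * p + (b : ℕ) - x.2)
      (j := fun j => (s - (t - j) / p, (t - j) % p))
    · rintro ⟨l, a⟩ hx
      simp only [Finset.mem_filter, Finset.mem_product, Finset.mem_range] at hx
      obtain ⟨⟨hls, hap⟩, hla⟩ := hx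
      simp only [Finset.mem_range]
      have hlp : l * p ≤ s * p := Nat.mul_le_mul_right p (by omega)
      omega
    · intro j hj
      simp only [Finset.mem_range] at hj
      obtain ⟨d, a, hd, ha, hap, hda⟩ :
          ∃ d a, d = (t - j) / p ∧ a = (t - j) % p ∧ a < p ∧ p * d + a = t - j :=
        ⟨_, _, rfl, rfl, Nat.mod_lt _ hp0, Nat.div_add_mod _ _⟩
      have hds : d ≤ s := by
        have h2 : p * d < p * (s + 1) := by
          have hc : p * s = s * p := Nat.mul_comm p s
          have hms : p * (s + 1) = p * s + p := Nat.mul_succ p s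
          omega
        have := Nat.lt_of_mul_lt_mul_left h2
        omega
      simp only [Finset.mem_filter, Finset.mem_product, Finset.mem_range]
      rw [← hd, ← ha]
      have hsub : (s - d) * p = s * p - d * p := Nat.sub_mul _ _ _
      have hdp : d * p ≤ s * p := Nat.mul_le_mul_right p hds
      have hcm : d * p = p * d := Nat.mul_comm _ _
      omega
    · rintro ⟨l, a⟩ hx
      simp only [Finset.mem_filter, Finset.mem_product, Finset.mem_range] at hx
      obtain ⟨⟨hls, hap⟩, hla⟩ := hx
      have hlp : l * p ≤ s * p := Nat.mul_le_mul_right p (by omega)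
      have hsub : (s - l) * p = s * p - l * p := Nat.sub_mul _ _ _
      have h1 : t - (l * p + (b : ℕ) - a) = (s - l) * p + a := by omega
      dsimp only
      rw [h1]
      have h2 : ((s - l) * p + a) / p = s - l := by
        rw [Nat.mul_comm, Nat.mul_add_div hp0, Nat.div_eq_of_lt hap, Nat.add_zero]
      have h3 : ((s - l) * p + a) % p = a := by
        rw [Nat.mul_comm, Nat.mul_add_mod, Nat.mod_eq_of_lt hap]
      rw [h2, h3]
      have h4 : s - (s - l) = l := by omega
      rw [h4]
    · intro j hj
      simp only [Finset.mem_range] at hj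
      obtain ⟨d, a, hd, ha, hap, hda⟩ :
          ∃ d a, d = (t - j) / p ∧ a = (t - j) % p ∧ a < p ∧ p * d + a = t - j :=
        ⟨_, _, rfl, rfl, Nat.mod_lt _ hp0, Nat.div_add_mod _ _⟩
      have hds : d ≤ s := by
        have h2 : p * d < p * (s + 1) := by
          have hc : p * s = s * p := Nat.mul_comm p s
          have hms : p * (s + 1) = p * s + p := Nat.mul_succ p s
          omega
        have := Nat.lt_of_mul_lt_mul_left h2
        omega
      dsimp only
      rw [← hd, ← ha]
      have hsub : (s - d) * p = s * p - d * p := Nat.sub_mul _ _ _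
      have hdp : d * p ≤ s * p := Nat.mul_le_mul_right p hds
      have hcm : d * p = p * d := Nat.mul_comm _ _
      omega
    · rintro ⟨l, a⟩ hx
      simp only [Finset.mem_filter, Finset.mem_product, Finset.mem_range] at hx
      obtain ⟨⟨hls, hap⟩, hla⟩ := hx
      have hlp : l * p ≤ s * p := Nat.mul_le_mul_right p (by omega)
      have hsub : (s - l) * p = s * p - l * p := Nat.sub_mul _ _ _
      have h1 : t - (l * p + (b : ℕ) - a) = (s - l) * p + a := by omega
      dsimp only
      rw [hF]
      dsimp only
      rw [h1]
  show C s (b, q) = _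
  calc C s (b, q) = c (s * p + (b : ℕ)) q := rfl
    _ = c t q := by rw [ht]
    _ = ∑ j ∈ Finset.range (t + 1), F j := step1
    _ = ∑ l ∈ Finset.range (s + 1), ∑ a ∈ Finset.range p, g l a := step3.symm
    _ = _ := step2.symm
end

section
/- Let p ≥ 1, k, n ≥ 1, m ≥ 0, and let G i j ∈ Matrix (Fin k) (Fin n) (ZMod 2) (i ∈ Fin p, j ∈ {0,…,m}) be the constituent matrices of a (p, n, k, m) periodically time-varying convolutional encoder. For l ∈ ℕ define the block matrix H l ∈ Matrix (Fin p × Fin k) (Fin p × Fin n) (ZMod 2) whose (a, r), (b, q) entry is (G (b mod p) (l·p + b − a)) r q when 0 ≤ l·p + b − a ≤ m, and 0 otherwise (a, b ∈ Fin p, r ∈ Fin k, q ∈ Fin n). Then for every input sequence u : ℕ → (Fin k → ZMod 2) with time-varying output c t = ∑_{j=0}^{min(t,m)} (u (t−j)) ᵥ* (G (t mod p) j), and every s ∈ ℕ, the blocked output satisfies C s = ∑_{l=0}^{s} (U (s−l)) ᵥ* (H l), where U s (a, r) = u (s·p + a) r and C s (a, q) = c (s·p + a) q. -/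
open Matrix


private lemma fwd' (p s b l a : ℕ) (hl : l ≤ s) (hab : a ≤ l*p+b) :
    l*p + b - a ≤ s*p + b ∧ s*p + b - (l*p+b-a) = (s-l)*p + a := by
  have h1 : l*p ≤ s*p := Nat.mul_le_mul_right p hl
  have h2 : (s-l)*p + l*p = s*p := by rw [← Nat.add_mul, Nat.sub_add_cancel hl]
  omega

private lemma bwd' (p s b j : ℕ) (hp : 1 ≤ p) (hb : b < p) (hj : j ≤ s*p + b) :
    (s*p+b-j)/p ≤ s ∧
    (s*p+b-j) % p ≤ (s - (s*p+b-j)/p)*p + b ∧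
    (s - (s*p+b-j)/p)*p + b - (s*p+b-j)%p = j ∧
    (s - (s - (s*p+b-j)/p))*p + (s*p+b-j)%p = s*p+b-j := by
  have key : ∀ d r, p*d + r = s*p+b-j → r < p → d ≤ s →
      (r ≤ (s-d)*p + b ∧ (s-d)*p + b - r = j ∧ (s-(s-d))*p + r = s*p+b-j) := by
    intro d r h1 h2 h3
    have hss : s - (s - d) = d := by omega
    rw [hss]
    have hsd : (s-d)*p + d*p = s*p := by rw [← Nat.add_mul, Nat.sub_add_cancel h3]
    have h4 : d*p = p*d := Nat.mul_comm _ _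
    omega
  have hds : (s*p+b-j)/p ≤ s := by
    have h1 : s*p+b-j < (s+1)*p := by
      have : (s+1)*p = s*p + p := by ring
      omega
    exact Nat.lt_succ_iff.mp ((Nat.div_lt_iff_lt_mul hp).mpr h1)
  obtain ⟨h1, h2, h3⟩ := key _ _ (Nat.div_add_mod _ p) (Nat.mod_lt _ hp) hds
  exact ⟨hds, h1, h2, h3⟩

/-- The explicit blocked time-invariant encoder `H` reproduces, on blocked inputs and
outputs, the action of the `(p, n, k, m)` periodically time-varying convolutional
encoder with constituent matrices `G`. -/
theorem blocked_encoder_reproduces_time_varying_encoder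
    (p k n m : ℕ) (hp : 1 ≤ p) (hk : 1 ≤ k) (hn : 1 ≤ n)
    (G : Fin p → Fin (m + 1) → Matrix (Fin k) (Fin n) (ZMod 2)) :
    -- the block matrices H l with entry (a,r),(b,q) equal to
    -- (G (b mod p) (l*p + b - a)) r q when 0 ≤ l*p + b - a ≤ m, and 0 otherwise
    let H : ℕ → Matrix (Fin p × Fin k) (Fin p × Fin n) (ZMod 2) := fun l =>
      Matrix.of fun x y =>
        if h : ((x.1 : ℕ) ≤ l * p + (y.1 : ℕ)) ∧ (l * p + (y.1 : ℕ) - (x.1 : ℕ) ≤ m) then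
          G ⟨(y.1 : ℕ) % p, Nat.mod_lt _ hp⟩
            ⟨l * p + (y.1 : ℕ) - (x.1 : ℕ), Nat.lt_succ_of_le h.2⟩ x.2 y.2
        else 0
    ∀ u : ℕ → Fin k → ZMod 2,
      -- output sequence: c t = ∑_{j=0}^{min(t,m)} u (t - j) ᵥ* G (t mod p) j
      let c : ℕ → Fin n → ZMod 2 := fun t =>
        ∑ j : Fin (m + 1), if (j : ℕ) ≤ t then
          (u (t - (j : ℕ))) ᵥ* (G ⟨t % p, Nat.mod_lt t hp⟩ j) else 0
      let U : ℕ → (Fin p × Fin k → ZMod 2) := fun s x => u (s * p + (x.1 : ℕ)) x.2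
      let C : ℕ → (Fin p × Fin n → ZMod 2) := fun s x => c (s * p + (x.1 : ℕ)) x.2
      ∀ s : ℕ, C s = ∑ l ∈ Finset.range (s + 1), (U (s - l)) ᵥ* (H l) := by
  intro H u c U C s
  funext x
  obtain ⟨b, q⟩ := x
  simp only [C, c, U, H, Finset.sum_apply, Matrix.vecMul, dotProduct,
    Matrix.of_apply, ite_apply, Pi.zero_apply, Fintype.sum_prod_type,
    mul_dite, mul_zero]
  have hb : (b : ℕ) < p := b.isLt
  -- abbreviation for the "normalized" matrix entry
  have e1 : (⟨(s*p+(b:ℕ)) % p, Nat.mod_lt _ hp⟩ : Fin p) = b := by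
    apply Fin.ext
    show (s*p+(b:ℕ)) % p = (b:ℕ)
    rw [Nat.mul_comm s p, Nat.mul_add_mod, Nat.mod_eq_of_lt hb]
  have e1' : (⟨(b:ℕ) % p, Nat.mod_lt _ hp⟩ : Fin p) = b := by
    apply Fin.ext
    simp [Nat.mod_eq_of_lt hb]
  trans ∑ j ∈ Finset.range (m+1), (if j ≤ s*p+(b:ℕ) then
      ∑ r : Fin k, u (s*p+(b:ℕ) - j) r *
        G b ⟨min j m, Nat.lt_succ_of_le (min_le_right _ _)⟩ r q else 0)
  · rw [← Fin.sum_univ_eq_sum_range]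
    refine Finset.sum_congr rfl fun x _ => ?_
    by_cases hx : (x:ℕ) ≤ s*p+(b:ℕ)
    · rw [if_pos hx, if_pos hx]
      refine Finset.sum_congr rfl fun r _ => ?_
      have hG : G ⟨(s*p+(b:ℕ)) % p, Nat.mod_lt _ hp⟩ x
          = G b ⟨min (x:ℕ) m, Nat.lt_succ_of_le (min_le_right _ _)⟩ := by
        rw [e1]
        exact congrArg (G b) (Fin.ext (by
          simp [Nat.min_eq_left (Nat.lt_succ_iff.mp x.isLt)]))
      rw [hG]
    · rw [if_neg hx, if_neg hx]
  trans ∑ la ∈ Finset.range (s+1) ×ˢ (Finset.univ : Finset (Fin p)),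
      (if ((la.2:ℕ)) ≤ la.1*p+(b:ℕ) ∧ la.1*p+(b:ℕ)-(la.2:ℕ) ≤ m then
        ∑ r : Fin k, u ((s-la.1)*p+(la.2:ℕ)) r *
          G b ⟨min (la.1*p+(b:ℕ)-(la.2:ℕ)) m, Nat.lt_succ_of_le (min_le_right _ _)⟩ r q
      else 0)
  · -- the reindexing bijection
    rw [← Finset.sum_filter, ← Finset.sum_filter]
    refine Finset.sum_nbij'
      (fun j => (s - (s*p+(b:ℕ)-j)/p, (⟨(s*p+(b:ℕ)-j) % p, Nat.mod_lt _ hp⟩ : Fin p)))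
      (fun la => la.1*p+(b:ℕ)-(la.2:ℕ)) ?_ ?_ ?_ ?_ ?_
    · intro j hj
      simp only [Finset.mem_filter, Finset.mem_range, Nat.lt_succ_iff] at hj
      obtain ⟨hjm, hjt⟩ := hj
      obtain ⟨hds, h1, h2, h3⟩ := bwd' p s (b:ℕ) j hp hb hjt
      simp only [Finset.mem_filter, Finset.mem_product, Finset.mem_range,
        Finset.mem_univ, Nat.lt_succ_iff]
      exact ⟨⟨Nat.sub_le _ _, trivial⟩, h1, by rw [h2]; exact hjm⟩
    · intro la hla
      simp only [Finset.mem_filter, Finset.mem_product, Finset.mem_range,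
        Nat.lt_succ_iff, Finset.mem_univ] at hla
      obtain ⟨⟨hls, -⟩, hab, hm⟩ := hla
      obtain ⟨h1, h2⟩ := fwd' p s (b:ℕ) la.1 (la.2:ℕ) hls hab
      simp only [Finset.mem_filter, Finset.mem_range, Nat.lt_succ_iff]
      exact ⟨hm, h1⟩
    · intro j hj
      simp only [Finset.mem_filter, Finset.mem_range, Nat.lt_succ_iff] at hj
      obtain ⟨h1, h2, h3, h4⟩ := bwd' p s (b:ℕ) j hp hb hj.2
      exact h3
    · intro la hla
      simp only [Finset.mem_filter, Finset.mem_product, Finset.mem_range,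
        Nat.lt_succ_iff, Finset.mem_univ] at hla
      obtain ⟨⟨hls, -⟩, hab, hm⟩ := hla
      obtain ⟨h1, h2⟩ := fwd' p s (b:ℕ) la.1 (la.2:ℕ) hls hab
      have ha : (la.2:ℕ) < p := la.2.isLt
      have hdiv : (s*p+(b:ℕ)-(la.1*p+(b:ℕ)-(la.2:ℕ)))/p = s - la.1 := by
        rw [h2, Nat.mul_comm, Nat.mul_add_div hp, Nat.div_eq_of_lt ha, Nat.add_zero]
      have hmod : (s*p+(b:ℕ)-(la.1*p+(b:ℕ)-(la.2:ℕ))) % p = (la.2:ℕ) := by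
        rw [h2, Nat.mul_comm, Nat.mul_add_mod, Nat.mod_eq_of_lt ha]
      obtain ⟨l, a⟩ := la
      simp only [Finset.mem_range, Nat.lt_succ_iff] at hls
      simp only at hdiv hmod ⊢
      refine Prod.ext ?_ (Fin.ext ?_)
      · simp only [hdiv]
        omega
      · simp only [hmod]
    · intro j hj
      simp only [Finset.mem_filter, Finset.mem_range, Nat.lt_succ_iff] at hj
      obtain ⟨h1, h2, h3, h4⟩ := bwd' p s (b:ℕ) j hp hb hj.2
      refine Finset.sum_congr rfl fun r _ => ?_
      simp only
      rw [h3, h4]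
  · -- unfold the product sum back into the double sum with the dite
    rw [Finset.sum_product]
    refine Finset.sum_congr rfl fun l hl => ?_
    refine Finset.sum_congr rfl fun a _ => ?_
    rw [Finset.sum_dite_irrel]
    by_cases hc : ((a:ℕ)) ≤ l*p+(b:ℕ) ∧ l*p+(b:ℕ)-(a:ℕ) ≤ m
    · rw [if_pos hc, dif_pos hc]
      refine Finset.sum_congr rfl fun r _ => ?_
      have hG : G b ⟨min (l*p+(b:ℕ)-(a:ℕ)) m, Nat.lt_succ_of_le (min_le_right _ _)⟩
          = G ⟨(b:ℕ) % p, Nat.mod_lt _ hp⟩ ⟨l*p+(b:ℕ)-(a:ℕ), Nat.lt_succ_of_le hc.2⟩ := by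
        rw [e1']
        exact congrArg (G b) (Fin.ext (by simp [Nat.min_eq_left hc.2]))
      rw [hG]
    · rw [if_neg hc, dif_neg hc]
      simp
end

section
/- Let p ≥ 1, k, n ≥ 1, m ≥ 0 and let G i j ∈ Matrix (Fin k) (Fin n) (ZMod 2) (i ∈ Fin p, j ∈ {0,…,m}) be the constituent matrices of a (p, n, k, m) periodically time-varying convolutional encoder E, with output map c t = ∑_{j=0}^{min(t,m)} (u (t−j)) ᵥ* (G (t mod p) j). Let E′ be its blocked time-invariant equivalent encoder, given by the matrices H l ∈ Matrix (Fin p × Fin k) (Fin p × Fin n) (ZMod 2) whose (a, r), (b, q) entry is (G (b mod p) (l·p + b − a)) r q when 0 ≤ l·p + b − a ≤ m and 0 otherwise, with output map C s = ∑_{l=0}^{s} (U (s−l)) ᵥ* (H l). Then E is catastrophic if and only if E′ is catastrophic: there exists an input u : ℕ → (Fin k → ZMod 2) with infinite support {t : u t ≠ 0} whose output under E has finite support, if and only if there exists an input U : ℕ → (Fin p × Fin k → ZMod 2) with infinite support whose output under E′ has finite support. -/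
open Matrix

private lemma key_sum (p k n m : ℕ) (hp : 1 ≤ p)
    (G : Fin p → Fin (m + 1) → Matrix (Fin k) (Fin n) (ZMod 2))
    (u : ℕ → Fin k → ZMod 2) (s : ℕ) (b : Fin p) (q : Fin n) :
    (∑ l ∈ Finset.range (s + 1),
        (fun x : Fin p × Fin k => u ((s - l) * p + (x.1 : ℕ)) x.2) ᵥ*
          (Matrix.of fun (x : Fin p × Fin k) (y : Fin p × Fin n) =>
            if h : ((x.1 : ℕ) ≤ l * p + (y.1 : ℕ)) ∧ (l * p + (y.1 : ℕ) - (x.1 : ℕ) ≤ m) then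
              G ⟨(y.1 : ℕ) % p, Nat.mod_lt _ hp⟩
                ⟨l * p + (y.1 : ℕ) - (x.1 : ℕ), Nat.lt_succ_of_le h.2⟩ x.2 y.2
            else 0)) (b, q) =
      (∑ j : Fin (m + 1), if (j : ℕ) ≤ s * p + (b : ℕ) then
        (u (s * p + (b : ℕ) - (j : ℕ))) ᵥ*
          (G ⟨(s * p + (b : ℕ)) % p, Nat.mod_lt _ hp⟩ j) else 0) q := by
  set t := s * p + (b : ℕ) with ht
  clear_value t
  set c : ℕ → ZMod 2 := fun j =>
    if h : j ≤ m ∧ j ≤ t then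
      ∑ r : Fin k, u (t - j) r * G b ⟨j, Nat.lt_succ_of_le h.1⟩ r q
    else 0 with hc
  have hbmod : (t % p) = (b : ℕ) := by
    rw [ht, Nat.add_comm (s * p) (b : ℕ), Nat.add_mul_mod_self_right,
      Nat.mod_eq_of_lt b.isLt]
  have hb : (⟨t % p, Nat.mod_lt _ hp⟩ : Fin p) = b := Fin.ext hbmod
  -- RHS = ∑ j ∈ range (m+1), c j
  have hR : (∑ j : Fin (m + 1), if (j : ℕ) ≤ t then
        (u (t - (j : ℕ))) ᵥ* (G ⟨t % p, Nat.mod_lt _ hp⟩ j) else 0) q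
      = ∑ j ∈ Finset.range (m + 1), c j :=
    calc (∑ j : Fin (m + 1), if (j : ℕ) ≤ t then
          (u (t - (j : ℕ))) ᵥ* (G ⟨t % p, Nat.mod_lt _ hp⟩ j) else 0) q
        = ∑ j : Fin (m + 1), (if (j : ℕ) ≤ t then
            (u (t - (j : ℕ))) ᵥ* (G ⟨t % p, Nat.mod_lt _ hp⟩ j) else 0) q :=
          Finset.sum_apply _ _ _
      _ = ∑ j : Fin (m + 1), c (j : ℕ) := by
          refine Finset.sum_congr rfl fun j _ => ?_
          rw [hb]
          simp only [hc]
          by_cases hjt : (j : ℕ) ≤ t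
          · rw [if_pos hjt, dif_pos ⟨Nat.lt_succ_iff.mp j.isLt, hjt⟩]
            simp [Matrix.vecMul, dotProduct]
          · rw [if_neg hjt, dif_neg (by tauto)]
            simp
      _ = ∑ j ∈ Finset.range (m + 1), c j := Fin.sum_univ_eq_sum_range c (m + 1)
  rw [hR]
  -- middle form indexed by input time t'
  set f : ℕ → ZMod 2 := fun t' =>
    if h : t' ≤ t ∧ t - t' ≤ m then
      ∑ r : Fin k, u t' r * G b ⟨t - t', Nat.lt_succ_of_le h.2⟩ r q
    else 0 with hf
  -- LHS = ∑ t' ∈ range ((s+1)*p), f t'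
  have hL : (∑ l ∈ Finset.range (s + 1),
        (fun x : Fin p × Fin k => u ((s - l) * p + (x.1 : ℕ)) x.2) ᵥ*
          (Matrix.of fun (x : Fin p × Fin k) (y : Fin p × Fin n) =>
            if h : ((x.1 : ℕ) ≤ l * p + (y.1 : ℕ)) ∧ (l * p + (y.1 : ℕ) - (x.1 : ℕ) ≤ m) then
              G ⟨(y.1 : ℕ) % p, Nat.mod_lt _ hp⟩
                ⟨l * p + (y.1 : ℕ) - (x.1 : ℕ), Nat.lt_succ_of_le h.2⟩ x.2 y.2
            else 0)) (b, q)
      = ∑ t' ∈ Finset.range ((s + 1) * p), f t' := by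
    rw [Finset.sum_apply]
    have expand : ∀ l ∈ Finset.range (s + 1),
        ((fun x : Fin p × Fin k => u ((s - l) * p + (x.1 : ℕ)) x.2) ᵥ*
          (Matrix.of fun (x : Fin p × Fin k) (y : Fin p × Fin n) =>
            if h : ((x.1 : ℕ) ≤ l * p + (y.1 : ℕ)) ∧ (l * p + (y.1 : ℕ) - (x.1 : ℕ) ≤ m) then
              G ⟨(y.1 : ℕ) % p, Nat.mod_lt _ hp⟩
                ⟨l * p + (y.1 : ℕ) - (x.1 : ℕ), Nat.lt_succ_of_le h.2⟩ x.2 y.2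
            else 0)) (b, q)
        = ∑ a : Fin p, f ((s - l) * p + (a : ℕ)) := by
      intro l hl
      have hls : l ≤ s := Nat.lt_succ_iff.mp (Finset.mem_range.mp hl)
      have hLS : l * p ≤ s * p := Nat.mul_le_mul_right p hls
      have hsubm : (s - l) * p = s * p - l * p := Nat.sub_mul s l p
      simp only [Matrix.vecMul, dotProduct, Matrix.of_apply, Fintype.sum_prod_type]
      refine Finset.sum_congr rfl fun a _ => ?_
      have hap : (a : ℕ) < p := a.isLt
      have hcond : ((a : ℕ) ≤ l * p + (b : ℕ) ∧ l * p + (b : ℕ) - (a : ℕ) ≤ m)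
          ↔ ((s - l) * p + (a : ℕ) ≤ t ∧ t - ((s - l) * p + (a : ℕ)) ≤ m) := by
        rw [hsubm, ht]
        constructor <;> intro h <;> omega
      have hval : (s - l) * p + (a : ℕ) ≤ t →
          t - ((s - l) * p + (a : ℕ)) = l * p + (b : ℕ) - (a : ℕ) := by
        rw [hsubm, ht]; intro; omega
      simp only [hf]
      by_cases h : ((a : ℕ) ≤ l * p + (b : ℕ) ∧ l * p + (b : ℕ) - (a : ℕ) ≤ m)
      · have h' := hcond.mp h
        rw [dif_pos h']
        refine Finset.sum_congr rfl fun r _ => ?_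
        rw [dif_pos h]
        have e1 : (⟨(b : ℕ) % p, Nat.mod_lt _ hp⟩ : Fin p) = b :=
          Fin.ext (Nat.mod_eq_of_lt b.isLt)
        have e2 : (⟨l * p + (b : ℕ) - (a : ℕ), Nat.lt_succ_of_le h.2⟩ : Fin (m + 1))
            = ⟨t - ((s - l) * p + (a : ℕ)), Nat.lt_succ_of_le h'.2⟩ :=
          Fin.ext (hval h'.1).symm
        rw [e1, e2]
      · rw [dif_neg (fun hC2 => h (hcond.mpr hC2))]
        refine Finset.sum_eq_zero fun r _ => ?_
        rw [dif_neg h, mul_zero]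
    rw [Finset.sum_congr rfl expand, ← Finset.sum_product']
    refine Finset.sum_nbij' (fun x : ℕ × Fin p => (s - x.1) * p + (x.2 : ℕ))
      (fun t' => (s - t' / p, ⟨t' % p, Nat.mod_lt _ hp⟩)) ?_ ?_ ?_ ?_ ?_
    · rintro ⟨l, a⟩ hla
      simp only [Finset.mem_product, Finset.mem_range] at hla ⊢
      calc (s - l) * p + (a : ℕ) < (s - l) * p + p := by omega
        _ = (s - l + 1) * p := by ring
        _ ≤ (s + 1) * p := Nat.mul_le_mul_right p (by omega)
    · intro t' ht'
      simp only [Finset.mem_product, Finset.mem_range, Finset.mem_univ, and_true]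
      exact Nat.lt_succ_of_le (Nat.sub_le s _)
    · rintro ⟨l, a⟩ hla
      simp only [Finset.mem_product, Finset.mem_range] at hla
      have hls : l ≤ s := Nat.lt_succ_iff.mp hla.1
      have h1 : ((s - l) * p + (a : ℕ)) / p = s - l := by
        rw [Nat.add_comm, Nat.add_mul_div_right _ _ (show 0 < p by omega),
          Nat.div_eq_of_lt a.isLt]
        exact Nat.zero_add _
      have h2 : ((s - l) * p + (a : ℕ)) % p = (a : ℕ) := by
        rw [Nat.add_comm, Nat.add_mul_mod_self_right, Nat.mod_eq_of_lt a.isLt]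
      have hfst : s - ((s - l) * p + (a : ℕ)) / p = l := by
        rw [h1]
        exact Nat.sub_sub_self hls
      exact Prod.ext_iff.mpr ⟨hfst, Fin.ext h2⟩
    · intro t' ht'
      simp only [Finset.mem_range] at ht'
      have hdiv : t' / p < s + 1 := (Nat.div_lt_iff_lt_mul (show 0 < p by omega)).mpr ht'
      show (s - (s - t' / p)) * p + t' % p = t'
      rw [Nat.sub_sub_self (Nat.lt_succ_iff.mp hdiv), Nat.mul_comm]
      exact Nat.div_add_mod t' p
    · rintro ⟨l, a⟩ hla
      rfl
  rw [hL]
  -- now: ∑ t' ∈ range ((s+1)*p), f t' = ∑ j ∈ range (m+1), c j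
  have htlt : t + 1 ≤ (s + 1) * p := by
    have hb' : (b : ℕ) < p := b.isLt
    have hmul : (s + 1) * p = s * p + p := by ring
    omega
  have step1 : ∑ t' ∈ Finset.range ((s + 1) * p), f t'
      = ∑ t' ∈ Finset.range (t + 1), f t' := by
    refine (Finset.sum_subset (Finset.range_subset_range.mpr htlt) ?_).symm
    intro t' _ ht'
    simp only [Finset.mem_range, not_lt] at ht'
    simp only [hf]
    rw [dif_neg (by omega)]
  have step2 : ∑ t' ∈ Finset.range (t + 1), f t'
      = ∑ j ∈ Finset.range (t + 1), f (t - j) := by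
    rw [← Finset.sum_range_reflect f (t + 1)]
    refine Finset.sum_congr rfl fun j hj => congrArg f ?_
    omega
  have step3 : ∀ j ∈ Finset.range (t + 1), f (t - j) = c j := by
    intro j hj
    have hjt : j ≤ t := Nat.lt_succ_iff.mp (Finset.mem_range.mp hj)
    have h1 : t - (t - j) = j := by omega
    simp only [hf, hc, h1]
    by_cases hm : j ≤ m
    · rw [dif_pos ⟨Nat.sub_le t j, hm⟩, dif_pos ⟨hm, hjt⟩]
    · rw [dif_neg (by tauto), dif_neg (by tauto)]
  have step4 : ∑ j ∈ Finset.range (t + 1), c j = ∑ j ∈ Finset.range (m + 1), c j := by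
    rcases le_total t m with h | h
    · refine Finset.sum_subset (Finset.range_subset_range.mpr (by omega)) ?_
      intro j _ hj
      simp only [Finset.mem_range, not_lt] at hj
      simp only [hc]
      rw [dif_neg (by omega)]
    · refine (Finset.sum_subset (Finset.range_subset_range.mpr (by omega)) ?_).symm
      intro j _ hj
      simp only [Finset.mem_range, not_lt] at hj
      simp only [hc]
      rw [dif_neg (by omega)]
  rw [step1, step2, Finset.sum_congr rfl step3, step4]

private lemma finite_of_div_mem {p : ℕ} (hp : 0 < p) {A B : Set ℕ}
    (h : ∀ t ∈ A, t / p ∈ B) (hB : B.Finite) : A.Finite := by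
  refine (hB.biUnion (fun s _ => Set.finite_Iio ((s + 1) * p))).subset ?_
  intro t ht
  refine Set.mem_biUnion (h t ht) ?_
  exact (Nat.div_lt_iff_lt_mul hp).mp (Nat.lt_succ_self (t / p))

/-- A `(p, n, k, m)` periodically time-varying convolutional encoder `E` is catastrophic
(some input of infinite weight produces an output of finite weight) if and only if its
blocked time-invariant equivalent encoder `E'` is catastrophic. -/
theorem time_varying_catastrophic_iff_blocked_catastrophic
    (p k n m : ℕ) (hp : 1 ≤ p) (hk : 1 ≤ k) (hn : 1 ≤ n)
    (G : Fin p → Fin (m + 1) → Matrix (Fin k) (Fin n) (ZMod 2)) :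
    -- output map of the periodically time-varying encoder E
    let outE : (ℕ → Fin k → ZMod 2) → (ℕ → Fin n → ZMod 2) := fun u t =>
      ∑ j : Fin (m + 1), if (j : ℕ) ≤ t then
        (u (t - (j : ℕ))) ᵥ* (G ⟨t % p, Nat.mod_lt t hp⟩ j) else 0
    -- block matrices of the blocked time-invariant equivalent encoder E'
    let H : ℕ → Matrix (Fin p × Fin k) (Fin p × Fin n) (ZMod 2) := fun l =>
      Matrix.of fun x y =>
        if h : ((x.1 : ℕ) ≤ l * p + (y.1 : ℕ)) ∧ (l * p + (y.1 : ℕ) - (x.1 : ℕ) ≤ m) then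
          G ⟨(y.1 : ℕ) % p, Nat.mod_lt _ hp⟩
            ⟨l * p + (y.1 : ℕ) - (x.1 : ℕ), Nat.lt_succ_of_le h.2⟩ x.2 y.2
        else 0
    -- output map of E'
    let outE' : (ℕ → Fin p × Fin k → ZMod 2) → (ℕ → Fin p × Fin n → ZMod 2) := fun U s =>
      ∑ l ∈ Finset.range (s + 1), (U (s - l)) ᵥ* (H l)
    ((∃ u : ℕ → Fin k → ZMod 2,
        {t : ℕ | u t ≠ 0}.Infinite ∧ {t : ℕ | outE u t ≠ 0}.Finite) ↔
      (∃ U : ℕ → Fin p × Fin k → ZMod 2,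
        {s : ℕ | U s ≠ 0}.Infinite ∧ {s : ℕ | outE' U s ≠ 0}.Finite)) := by
  intro outE H outE'
  have hp0 : 0 < p := hp
  have key : ∀ (u : ℕ → Fin k → ZMod 2) (s : ℕ) (b : Fin p) (q : Fin n),
      outE' (fun s x => u (s * p + (x.1 : ℕ)) x.2) s (b, q) = outE u (s * p + (b : ℕ)) q := by
    intro u s b q
    simp only [outE', outE, H]
    exact key_sum p k n m hp G u s b q
  have hdiv : ∀ (s : ℕ) (a : Fin p), (s * p + (a : ℕ)) / p = s := by
    intro s a
    rw [Nat.add_comm, Nat.add_mul_div_right _ _ hp0, Nat.div_eq_of_lt a.isLt, Nat.zero_add]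
  have hmod : ∀ (s : ℕ) (a : Fin p), (s * p + (a : ℕ)) % p = (a : ℕ) := by
    intro s a
    rw [Nat.add_comm, Nat.add_mul_mod_self_right, Nat.mod_eq_of_lt a.isLt]
  have htt : ∀ t : ℕ, t / p * p + t % p = t := by
    intro t; rw [Nat.mul_comm]; exact Nat.div_add_mod t p
  constructor
  · rintro ⟨u, huinf, hufin⟩
    refine ⟨fun s x => u (s * p + (x.1 : ℕ)) x.2, ?_, ?_⟩
    · by_contra hfin
      rw [Set.not_infinite] at hfin
      refine huinf (finite_of_div_mem hp0 ?_ hfin)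
      intro t ht
      simp only [Set.mem_setOf_eq] at ht ⊢
      intro hz
      apply ht
      funext r
      have h0 := congrFun hz ((⟨t % p, Nat.mod_lt t hp⟩ : Fin p), r)
      simpa [htt t] using h0
    · refine (hufin.image (· / p)).subset ?_
      intro s hs
      simp only [Set.mem_setOf_eq] at hs
      obtain ⟨⟨b, q⟩, hbq⟩ : ∃ y, outE' (fun s x => u (s * p + (x.1 : ℕ)) x.2) s y ≠ 0 := by
        by_contra hall
        push_neg at hall
        exact hs (funext hall)
      refine ⟨s * p + (b : ℕ), ?_, hdiv s b⟩
      simp only [Set.mem_setOf_eq]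
      intro h0
      rw [key u s b q] at hbq
      exact hbq (by rw [h0]; rfl)
  · rintro ⟨U, hUinf, hUfin⟩
    set u : ℕ → Fin k → ZMod 2 := fun t r => U (t / p) (⟨t % p, Nat.mod_lt t hp⟩, r) with hu
    have hUu : U = fun s x => u (s * p + (x.1 : ℕ)) x.2 := by
      funext s x
      obtain ⟨a, r⟩ := x
      simp only [hu]
      simp [hdiv s a, hmod s a]
    refine ⟨u, ?_, ?_⟩
    · by_contra hfin
      rw [Set.not_infinite] at hfin
      refine hUinf ((hfin.image (· / p)).subset ?_)
      intro s hs
      simp only [Set.mem_setOf_eq] at hs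
      obtain ⟨⟨a, r⟩, har⟩ : ∃ y, U s y ≠ 0 := by
        by_contra hall
        push_neg at hall
        exact hs (funext hall)
      refine ⟨s * p + (a : ℕ), ?_, hdiv s a⟩
      simp only [Set.mem_setOf_eq]
      intro h0
      apply har
      have h1 := congrFun h0 r
      rw [hUu]
      simpa [hdiv s a, hmod s a] using h1
    · refine finite_of_div_mem hp0 ?_ hUfin
      intro t ht
      simp only [Set.mem_setOf_eq] at ht ⊢
      intro h0
      apply ht
      funext q
      have hkey := key u (t / p) ⟨t % p, Nat.mod_lt t hp⟩ q
      rw [← hUu] at hkey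
      have htt' : t / p * p + ((⟨t % p, Nat.mod_lt t hp⟩ : Fin p) : ℕ) = t := htt t
      rw [htt'] at hkey
      have h1 := congrFun h0 ((⟨t % p, Nat.mod_lt t hp⟩ : Fin p), q)
      rw [hkey] at h1
      simpa using h1
end

section
/- Let p ≥ 1, let I : Fin p → PowerSeries (ZMod 2), and let f ∈ PowerSeries (ZMod 2). Let serialize denote the interleaving map sending p power series to the power series whose coefficient at index j·p + i equals the j-th coefficient of the i-th series. Then serialize (I 0 * f, …, I (p−1) * f) = serialize (I 0, …, I (p−1)) * PowerSeries.subst (X^p) f; that is, multiplying each of the p branch series by f corresponds to multiplying their serialization by f(X^p). -/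
/-- Substitution of `X^p` into a formal power series `f` over GF(2): the coefficient of
`f(X^p)` at index `t` is the `(t/p)`-th coefficient of `f` when `p ∣ t`, and `0`
otherwise (this is `PowerSeries.subst (X^p) f`, well defined since `X^p` has zero
constant coefficient for `p ≥ 1`). -/
noncomputable def substXPow (p : ℕ) (f : PowerSeries (ZMod 2)) : PowerSeries (ZMod 2) :=
  PowerSeries.mk fun t => if p ∣ t then PowerSeries.coeff (t / p) f else 0

/-- The serialization (interleaving) of `p` power series `I 0, …, I (p-1)` over GF(2):
its coefficient at index `j*p + i` (for `j : ℕ`, `0 ≤ i < p`) is the `j`-th coefficient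
of `I i`. -/
noncomputable def serialize {p : ℕ} (hp : 1 ≤ p) (I : Fin p → PowerSeries (ZMod 2)) :
    PowerSeries (ZMod 2) :=
  PowerSeries.mk fun t => PowerSeries.coeff (t / p) (I ⟨t % p, Nat.mod_lt t hp⟩)

private lemma aux_div (a r p : ℕ) (h : 0 < p) (hr : r < p) : (a * p + r) / p = a := by
  rw [add_comm, Nat.add_mul_div_right _ _ h, Nat.div_eq_of_lt hr, Nat.zero_add]

private lemma aux_mod (a r p : ℕ) (hr : r < p) : (a * p + r) % p = r := by
  rw [add_comm, Nat.add_mul_mod_self_right, Nat.mod_eq_of_lt hr]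

/-- Multiplying each of the `p` branch series by `f` corresponds to multiplying their
serialization by `f(X^p)`. -/
theorem serialize_mul_eq_mul_subst
    (p : ℕ) (hp : 1 ≤ p) (I : Fin p → PowerSeries (ZMod 2)) (f : PowerSeries (ZMod 2)) :
    serialize hp (fun i => I i * f) = serialize hp I * substXPow p f := by
  have hp0 : 0 < p := hp
  ext t
  simp only [serialize, substXPow, PowerSeries.coeff_mk, PowerSeries.coeff_mul, mul_ite, mul_zero]
  rw [← Finset.sum_filter]
  refine Finset.sum_nbij' (i := fun x => (x.1 * p + t % p, x.2 * p))
    (j := fun x => (x.1 / p, x.2 / p)) ?_ ?_ ?_ ?_ ?_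
  · rintro ⟨a, b⟩ hab
    simp only [Finset.HasAntidiagonal.mem_antidiagonal] at hab
    simp only [Finset.mem_filter, Finset.HasAntidiagonal.mem_antidiagonal]
    refine ⟨?_, Dvd.intro_left b rfl⟩
    have h1 : a * p + t % p + b * p = (a + b) * p + t % p := by ring
    rw [h1, hab, Nat.div_add_mod' t p]
  · rintro ⟨c, d⟩ hcd
    simp only [Finset.mem_filter, Finset.HasAntidiagonal.mem_antidiagonal] at hcd
    obtain ⟨hcd, k, hk⟩ := hcd
    simp only [Finset.HasAntidiagonal.mem_antidiagonal]
    subst hk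
    subst hcd
    rw [Nat.mul_div_cancel_left _ hp0, add_comm c, Nat.mul_add_div hp0, add_comm]
  · rintro ⟨a, b⟩ hab
    simp only [Prod.mk.injEq]
    exact ⟨aux_div a _ p hp0 (Nat.mod_lt t hp0), Nat.mul_div_cancel _ hp0⟩
  · rintro ⟨c, d⟩ hcd
    simp only [Finset.mem_filter, Finset.HasAntidiagonal.mem_antidiagonal] at hcd
    obtain ⟨hcd, k, hk⟩ := hcd
    simp only [Prod.mk.injEq]
    have hcm : c % p = t % p := by
      rw [← hcd, hk, Nat.mul_comm p k, Nat.add_mul_mod_self_right]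
    refine ⟨?_, ?_⟩
    · rw [hcm.symm, Nat.div_add_mod' c p]
    · rw [hk, Nat.mul_div_cancel_left _ hp0, Nat.mul_comm]
  · rintro ⟨a, b⟩ hab
    have h1 : (a * p + t % p) / p = a := aux_div a _ p hp0 (Nat.mod_lt t hp0)
    have h2 : (a * p + t % p) % p = t % p := aux_mod a _ p (Nat.mod_lt t hp0)
    have h3 : b * p / p = b := Nat.mul_div_cancel _ hp0
    simp [h1, h2, h3]
end

section
/- Let p ≥ 1, let I : Fin p → PowerSeries (ZMod 2), and let f ∈ PowerSeries (ZMod 2) be a unit (equivalently, its constant coefficient is 1). Then PowerSeries.subst (X^p) f is also a unit, and serialize (I 0 * f⁻¹, …, I (p−1) * f⁻¹) = serialize (I 0, …, I (p−1)) * (PowerSeries.subst (X^p) f)⁻¹, where serialize denotes the interleaving map sending p power series to the power series whose coefficient at index j·p + i equals the j-th coefficient of the i-th series. (Dividing all p branch input sequences by f(D) corresponds to dividing the serialized input sequence by f(D^p).) -/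
lemma serialize_mul_substXPow {p : ℕ} (hp : 1 ≤ p) (I : Fin p → PowerSeries (ZMod 2))
    (g : PowerSeries (ZMod 2)) :
    serialize hp (fun i => I i * g) = serialize hp I * substXPow p g := by
  have hp0 : 0 < p := hp
  ext t
  rw [serialize, serialize, substXPow, PowerSeries.coeff_mk, PowerSeries.coeff_mul,
    PowerSeries.coeff_mul]
  have hsplit : ∀ x : ℕ × ℕ, x.1 + x.2 = t → p ∣ x.2 →
      x.1 % p = t % p ∧ x.1 / p + x.2 / p = t / p := by
    rintro ⟨a, b⟩ h ⟨k, rfl⟩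
    simp only at h ⊢
    subst h
    constructor
    · exact (Nat.add_mul_mod_self_left a p k).symm
    · rw [Nat.add_mul_div_left _ _ hp0, Nat.mul_div_cancel_left _ hp0]
  have hd : ∀ u : ℕ, (u * p + t % p) / p = u := by
    intro u
    rw [mul_comm, Nat.mul_add_div hp0, Nat.div_eq_of_lt (Nat.mod_lt t hp0), add_zero]
  have hm : ∀ u : ℕ, (u * p + t % p) % p = t % p := by
    intro u
    rw [mul_comm, Nat.mul_add_mod, Nat.mod_eq_of_lt (Nat.mod_lt t hp0)]
  simp only [PowerSeries.coeff_mk, mul_ite, mul_zero]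
  rw [← Finset.sum_filter]
  refine (Finset.sum_nbij' (fun x => (x.1 / p, x.2 / p)) (fun x => (x.1 * p + t % p, x.2 * p))
      ?_ ?_ ?_ ?_ ?_).symm
  · intro x hx
    simp only [Finset.mem_filter, Finset.HasAntidiagonal.mem_antidiagonal] at hx
    rw [Finset.HasAntidiagonal.mem_antidiagonal]
    exact (hsplit x hx.1 hx.2).2
  · intro x hx
    rw [Finset.HasAntidiagonal.mem_antidiagonal] at hx
    simp only [Finset.mem_filter, Finset.HasAntidiagonal.mem_antidiagonal]
    exact ⟨by rw [add_right_comm, ← add_mul, hx]; exact Nat.div_add_mod' t p, dvd_mul_left p x.2⟩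
  · intro x hx
    simp only [Finset.mem_filter, Finset.HasAntidiagonal.mem_antidiagonal] at hx
    obtain ⟨h1, h2⟩ := hsplit x hx.1 hx.2
    have e1 : x.1 / p * p + t % p = x.1 := by rw [← h1]; exact Nat.div_add_mod' x.1 p
    have e2 : x.2 / p * p = x.2 := Nat.div_mul_cancel hx.2
    simp only [e1, e2]
  · intro x hx
    simp only [hd, hm, Nat.mul_div_cancel _ hp0]
  · intro x hx
    simp only [Finset.mem_filter, Finset.HasAntidiagonal.mem_antidiagonal] at hx
    have h1 := (hsplit x hx.1 hx.2).1
    simp only [h1]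

lemma coeff_substXPow_zero (p : ℕ) (f : PowerSeries (ZMod 2)) :
    PowerSeries.constantCoeff (substXPow p f) =
      PowerSeries.constantCoeff f := by
  simp [substXPow, ← PowerSeries.coeff_zero_eq_constantCoeff]

/-- If `f` is a unit power series, then `f(X^p)` is a unit, and dividing all `p` branch
input sequences by `f(D)` corresponds to dividing the serialized input sequence by
`f(D^p)`. -/
theorem serialize_div_unit_eq_mul_inv_subst
    (p : ℕ) (hp : 1 ≤ p) (I : Fin p → PowerSeries (ZMod 2)) (f : PowerSeries (ZMod 2))
    (hf : IsUnit f) :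
    IsUnit (substXPow p f) ∧
      serialize hp (fun i => I i * f⁻¹) = serialize hp I * (substXPow p f)⁻¹ := by
  have hc : PowerSeries.constantCoeff f ≠ 0 := by
    intro h
    have := hf.map PowerSeries.constantCoeff
    rw [h] at this
    exact not_isUnit_zero this
  have hcs : PowerSeries.constantCoeff (substXPow p f) ≠ 0 := by
    rw [coeff_substXPow_zero]; exact hc
  have hu : IsUnit (substXPow p f) := PowerSeries.isUnit_iff_constantCoeff.mpr
    (isUnit_iff_ne_zero.mpr hcs)
  refine ⟨hu, ?_⟩
  have hI : (fun i : Fin p => I i * f⁻¹ * f) = I := by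
    funext i
    rw [mul_assoc, PowerSeries.inv_mul_cancel _ hc, mul_one]
  have key : serialize hp (fun i => I i * f⁻¹) * substXPow p f = serialize hp I := by
    rw [← serialize_mul_substXPow, hI]
  calc serialize hp (fun i => I i * f⁻¹)
      = serialize hp (fun i => I i * f⁻¹) * (substXPow p f * (substXPow p f)⁻¹) := by
        rw [PowerSeries.mul_inv_cancel _ hcs, mul_one]
    _ = (serialize hp (fun i => I i * f⁻¹) * substXPow p f) * (substXPow p f)⁻¹ := by rw [mul_assoc]
    _ = serialize hp I * (substXPow p f)⁻¹ := by rw [key]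
end
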